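/- In the Core logic sequent calculus, every Core-derivable sequent Δ ⊢ C is intuitionistically derivable. -/
import Mathlib


inductive Form : Type where
  | var : Nat → Form
  | neg : Form → Form
  | conj : Form → Form → Form
  | disj : Form → Form → Form
  | imp : Form → Form → Form
deriving DecidableEq

open Form

/-- Sequent calculus for propositional Core logic (Tennant).
Contexts are finite sets of formulas; the conclusion is `some C` or `none`
(the empty / absurdity conclusion ⊥). -/
inductive Core : Finset Form → Option Form → Prop where
  | ax (A : Form) : Core {A} (some A)
  | lneg {Δ : Finset Form} {A : Form} :
      Core Δ (some A) → Core (insert (Form.neg A) Δ) none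
  | rneg {Δ : Finset Form} {A : Form} :
      Core (insert A Δ) none → Core Δ (some (Form.neg A))
  | landL {Δ : Finset Form} {x : Option Form} (A B : Form) :
      Core Δ x → (Δ ∩ {A, B}).Nonempty →
      Core (insert (Form.conj A B) (Δ \ {A, B})) x
  | randR {Δ Γ : Finset Form} {A B : Form} :
      Core Δ (some A) → Core Γ (some B) → Core (Δ ∪ Γ) (some (Form.conj A B))
  | lor {Δ Γ : Finset Form} {A B : Form} {x y z : Option Form} :
      Core (insert A Δ) x → Core (insert B Γ) y →
      ((x = z ∧ (y = z ∨ y = none)) ∨ (y = z ∧ x = none)) →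
      Core (insert (Form.disj A B) (Δ ∪ Γ)) z
  | ror1 {Δ : Finset Form} {A : Form} (B : Form) :
      Core Δ (some A) → Core Δ (some (Form.disj A B))
  | ror2 {Δ : Finset Form} {B : Form} (A : Form) :
      Core Δ (some B) → Core Δ (some (Form.disj A B))
  | limp {Δ Γ : Finset Form} {A B : Form} {x : Option Form} :
      Core Δ (some A) → Core (insert B Γ) x →
      Core (insert (Form.imp A B) (Δ ∪ Γ)) x
  | rimpa {Δ : Finset Form} {A : Form} (B : Form) :
      Core (insert A Δ) none → Core Δ (some (Form.imp A B))
  | rimpb {Δ : Finset Form} {B : Form} (A : Form) :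
      Core Δ (some B) → Core (Δ \ {A}) (some (Form.imp A B))

/-- Standard intuitionistic propositional natural deduction, with conclusion
`some C` for a formula or `none` for absurdity (⊥). -/
inductive Intu : Finset Form → Option Form → Prop where
  | ax {Δ : Finset Form} {A : Form} : A ∈ Δ → Intu Δ (some A)
  | negE {Δ : Finset Form} {A : Form} :
      Intu Δ (some (Form.neg A)) → Intu Δ (some A) → Intu Δ none
  | negI {Δ : Finset Form} {A : Form} :
      Intu (insert A Δ) none → Intu Δ (some (Form.neg A))
  | exfalso {Δ : Finset Form} {C : Form} : Intu Δ none → Intu Δ (some C)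
  | andI {Δ : Finset Form} {A B : Form} :
      Intu Δ (some A) → Intu Δ (some B) → Intu Δ (some (Form.conj A B))
  | andE1 {Δ : Finset Form} {A B : Form} :
      Intu Δ (some (Form.conj A B)) → Intu Δ (some A)
  | andE2 {Δ : Finset Form} {A B : Form} :
      Intu Δ (some (Form.conj A B)) → Intu Δ (some B)
  | orI1 {Δ : Finset Form} {A : Form} (B : Form) :
      Intu Δ (some A) → Intu Δ (some (Form.disj A B))
  | orI2 {Δ : Finset Form} {B : Form} (A : Form) :
      Intu Δ (some B) → Intu Δ (some (Form.disj A B))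
  | orE {Δ : Finset Form} {A B : Form} {x : Option Form} :
      Intu Δ (some (Form.disj A B)) → Intu (insert A Δ) x → Intu (insert B Δ) x →
      Intu Δ x
  | impI {Δ : Finset Form} {A B : Form} :
      Intu (insert A Δ) (some B) → Intu Δ (some (Form.imp A B))
  | impE {Δ : Finset Form} {A B : Form} :
      Intu Δ (some (Form.imp A B)) → Intu Δ (some A) → Intu Δ (some B)


theorem Intu.weaken : ∀ {Δ : Finset Form} {x : Option Form}, Intu Δ x →
    ∀ {Γ : Finset Form}, Δ ⊆ Γ → Intu Γ x := by
  intro Δ x h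
  induction h with
  | ax hm => intro Γ hs; exact Intu.ax (hs hm)
  | negE _ _ ih1 ih2 => intro Γ hs; exact Intu.negE (ih1 hs) (ih2 hs)
  | negI _ ih => intro Γ hs; exact Intu.negI (ih (Finset.insert_subset_insert _ hs))
  | exfalso _ ih => intro Γ hs; exact Intu.exfalso (ih hs)
  | andI _ _ ih1 ih2 => intro Γ hs; exact Intu.andI (ih1 hs) (ih2 hs)
  | andE1 _ ih => intro Γ hs; exact Intu.andE1 (ih hs)
  | andE2 _ ih => intro Γ hs; exact Intu.andE2 (ih hs)
  | orI1 B _ ih => intro Γ hs; exact Intu.orI1 B (ih hs)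
  | orI2 A _ ih => intro Γ hs; exact Intu.orI2 A (ih hs)
  | orE _ _ _ ih1 ih2 ih3 =>
      intro Γ hs
      exact Intu.orE (ih1 hs) (ih2 (Finset.insert_subset_insert _ hs))
        (ih3 (Finset.insert_subset_insert _ hs))
  | impI _ ih => intro Γ hs; exact Intu.impI (ih (Finset.insert_subset_insert _ hs))
  | impE _ _ ih1 ih2 => intro Γ hs; exact Intu.impE (ih1 hs) (ih2 hs)

theorem Intu.ofNone {Δ : Finset Form} (h : Intu Δ none) (x : Option Form) : Intu Δ x := by
  cases x with
  | none => exact h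
  | some C => exact Intu.exfalso h

theorem Intu.subst : ∀ {Δ : Finset Form} {x : Option Form}, Intu Δ x →
    ∀ {Γ : Finset Form}, (∀ B ∈ Δ, Intu Γ (some B)) → Intu Γ x := by
  intro Δ x h
  induction h with
  | ax hm => intro Γ hs; exact hs _ hm
  | negE _ _ ih1 ih2 => intro Γ hs; exact Intu.negE (ih1 hs) (ih2 hs)
  | @negI Δ A _ ih =>
      intro Γ hs
      refine Intu.negI (ih ?_)
      intro B hB
      rcases Finset.mem_insert.mp hB with h1 | h1
      · exact h1 ▸ Intu.ax (Finset.mem_insert_self _ _)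
      · exact Intu.weaken (hs B h1) (Finset.subset_insert _ _)
  | exfalso _ ih => intro Γ hs; exact Intu.exfalso (ih hs)
  | andI _ _ ih1 ih2 => intro Γ hs; exact Intu.andI (ih1 hs) (ih2 hs)
  | andE1 _ ih => intro Γ hs; exact Intu.andE1 (ih hs)
  | andE2 _ ih => intro Γ hs; exact Intu.andE2 (ih hs)
  | orI1 B _ ih => intro Γ hs; exact Intu.orI1 B (ih hs)
  | orI2 A _ ih => intro Γ hs; exact Intu.orI2 A (ih hs)
  | @orE Δ A B x _ _ _ ih1 ih2 ih3 =>
      intro Γ hs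
      refine Intu.orE (ih1 hs) (ih2 ?_) (ih3 ?_) <;>
      · intro C hC
        rcases Finset.mem_insert.mp hC with h1 | h1
        · exact h1 ▸ Intu.ax (Finset.mem_insert_self _ _)
        · exact Intu.weaken (hs C h1) (Finset.subset_insert _ _)
  | @impI Δ A B _ ih =>
      intro Γ hs
      refine Intu.impI (ih ?_)
      intro C hC
      rcases Finset.mem_insert.mp hC with h1 | h1
      · exact h1 ▸ Intu.ax (Finset.mem_insert_self _ _)
      · exact Intu.weaken (hs C h1) (Finset.subset_insert _ _)
  | impE _ _ ih1 ih2 => intro Γ hs; exact Intu.impE (ih1 hs) (ih2 hs)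

theorem Intu.cut {Δ : Finset Form} {A : Form} {x : Option Form}
    (h1 : Intu Δ (some A)) (h2 : Intu (insert A Δ) x) : Intu Δ x := by
  refine Intu.subst h2 ?_
  intro B hB
  rcases Finset.mem_insert.mp hB with h | h
  · exact h ▸ h1
  · exact Intu.ax h

/-- every Core-derivable sequent is intuitionistically derivable. -/
theorem core_subsystem_of_intuitionistic (Δ : Finset Form) (x : Option Form)
    (h : Core Δ x) : Intu Δ x := by
  induction h with
  | ax A => exact Intu.ax (Finset.mem_singleton_self A)
  | @lneg Δ A _ ih =>
      exact Intu.negE (Intu.ax (Finset.mem_insert_self _ _))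
        (Intu.weaken ih (Finset.subset_insert _ _))
  | rneg _ ih => exact Intu.negI ih
  | @landL Δ x A B _ _ ih =>
      refine Intu.subst ih ?_
      intro C hC
      by_cases hA : C = A
      · exact hA ▸ Intu.andE1 (Intu.ax (Finset.mem_insert_self _ _))
      by_cases hB : C = B
      · exact hB ▸ Intu.andE2 (Intu.ax (Finset.mem_insert_self _ _))
      refine Intu.ax (Finset.mem_insert_of_mem ?_)
      simp [Finset.mem_sdiff, hC, hA, hB]
  | @randR Δ Γ A B _ _ ih1 ih2 =>
      exact Intu.andI (Intu.weaken ih1 Finset.subset_union_left)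
        (Intu.weaken ih2 Finset.subset_union_right)
  | @lor Δ Γ A B x y z _ _ hxyz ih1 ih2 =>
      have hA : Intu (insert A (insert (Form.disj A B) (Δ ∪ Γ))) x := by
        refine Intu.weaken ih1 (Finset.insert_subset_insert _ ?_)
        exact (Finset.subset_insert _ _).trans
          (Finset.insert_subset_insert _ Finset.subset_union_left) |>.trans (le_refl _)
      have hB : Intu (insert B (insert (Form.disj A B) (Δ ∪ Γ))) y := by
        refine Intu.weaken ih2 (Finset.insert_subset_insert _ ?_)
        exact Finset.subset_union_right.trans (Finset.subset_insert _ _)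
      have hA' : Intu (insert A (insert (Form.disj A B) (Δ ∪ Γ))) z := by
        rcases hxyz with ⟨hx, _⟩ | ⟨_, hx⟩
        · exact hx ▸ hA
        · exact Intu.ofNone (hx ▸ hA) z
      have hB' : Intu (insert B (insert (Form.disj A B) (Δ ∪ Γ))) z := by
        rcases hxyz with ⟨_, hy | hy⟩ | ⟨hy, _⟩
        · exact hy ▸ hB
        · exact Intu.ofNone (hy ▸ hB) z
        · exact hy ▸ hB
      exact Intu.orE (Intu.ax (Finset.mem_insert_self _ _)) hA' hB'
  | ror1 B _ ih => exact Intu.orI1 B ih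
  | ror2 A _ ih => exact Intu.orI2 A ih
  | @limp Δ Γ A B x _ _ ih1 ih2 =>
      have hB : Intu (insert (Form.imp A B) (Δ ∪ Γ)) (some B) :=
        Intu.impE (Intu.ax (Finset.mem_insert_self _ _))
          (Intu.weaken ih1 (Finset.subset_union_left.trans (Finset.subset_insert _ _)))
      refine Intu.cut hB (Intu.weaken ih2 (Finset.insert_subset_insert _ ?_))
      exact Finset.subset_union_right.trans (Finset.subset_insert _ _)
  | rimpa B _ ih => exact Intu.impI (Intu.exfalso ih)
  | @rimpb Δ B A _ ih =>
      refine Intu.impI (Intu.weaken ih ?_)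
      intro C hC
      by_cases hA : C = A
      · exact hA ▸ Finset.mem_insert_self _ _
      · exact Finset.mem_insert_of_mem (by simp [Finset.mem_sdiff, hC, hA])
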